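/- arXiv:1308.4832 — 6 statements merged into one kernel-verified Lean document; each statement's English description precedes it below -/
import Mathlib

section
/- Let k be a field, A a commutative unital k-algebra, and L a Lie algebra over k. Let I be an index set, ρ : I × I → Set I, (V_p)_{p∈I} k-submodules of L with ⨆_p V_p = L and such that for all p, q ∈ I and x ∈ V_p, y ∈ V_q, the bracket ⁅x,y⁆ lies in the submodule sum Σ_{r∈ρ(p,q)} V_r, and let (A_p)_{p∈I} be k-submodules of A satisfying the resonance condition: for all p, q ∈ I, a ∈ A_p, b ∈ A_q and every r ∈ ρ(p,q), the product a·b lies in A_r. Then the resonant subspace of A ⊗[k] L — the k-submodule spanned by the pure tensors a ⊗ x with a ∈ A_p and x ∈ V_p for some p ∈ I — is closed under the Lie bracket of A ⊗[k] L, i.e., it is a Lie subalgebra (the resonant subalgebra 𝒢_{S,R}). -/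
open scoped TensorProduct

theorem Submodule.lie_mem_span_of_forall_lie_mem {R M : Type*} [CommRing R] [LieRing M]
    [LieAlgebra R M] {s : Set M} (h : ∀ x ∈ s, ∀ y ∈ s, ⁅x, y⁆ ∈ span R s) {u v : M}
    (hu : u ∈ span R s) (hv : v ∈ span R s) : ⁅u, v⁆ ∈ span R s := by
  have hle : map₂ (LieModule.toEnd R M M : M →ₗ[R] Module.End R M) (span R s) (span R s) ≤
      span R s := by
    rw [map₂_span_span, span_le]
    rintro _ ⟨x, hx, y, hy, rfl⟩
    exact h x hx y hy
  exact hle (apply_mem_map₂ _ hu hv)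

section Resonant

variable {k A L I : Type*} [CommRing k] [CommRing A] [Algebra k A] [LieRing L] [LieAlgebra k L]

/-- The paper's resonant subalgebra `⨁ₚ Sₚ ⊗ Vₚ`. -/
def resonantSubspace (S : I → Submodule k A) (V : I → Submodule k L) :
    Submodule k (A ⊗[k] L) :=
  Submodule.span k {t | ∃ p a x, a ∈ S p ∧ x ∈ V p ∧ t = a ⊗ₜ[k] x}

variable {S : I → Submodule k A} {V : I → Submodule k L}

theorem tmul_mem_resonantSubspace {p : I} {a : A} {x : L} (ha : a ∈ S p) (hx : x ∈ V p) :
    a ⊗ₜ[k] x ∈ resonantSubspace S V :=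
  Submodule.subset_span ⟨p, a, x, ha, hx, rfl⟩

theorem tmul_mem_resonantSubspace_of_mem_biSup {s : Set I} {a : A} {z : L}
    (ha : ∀ r ∈ s, a ∈ S r) (hz : z ∈ ⨆ r ∈ s, V r) : a ⊗ₜ[k] z ∈ resonantSubspace S V := by
  have hle : ⨆ r ∈ s, V r ≤ (resonantSubspace S V).comap (TensorProduct.mk k A L a) :=
    iSup₂_le fun r hr _ hx ↦ tmul_mem_resonantSubspace (ha r hr) hx
  exact hle hz

theorem lie_tmul_mem_resonantSubspace {ρ : I × I → Set I}
    (hbracket : ∀ p q : I, ∀ x ∈ V p, ∀ y ∈ V q, ⁅x, y⁆ ∈ ⨆ r ∈ ρ (p, q), V r)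
    (hres : ∀ p q : I, ∀ r ∈ ρ (p, q), ∀ a ∈ S p, ∀ b ∈ S q, a * b ∈ S r)
    {p q : I} {a b : A} {x y : L} (ha : a ∈ S p) (hx : x ∈ V p) (hb : b ∈ S q) (hy : y ∈ V q) :
    ⁅a ⊗ₜ[k] x, b ⊗ₜ[k] y⁆ ∈ resonantSubspace S V := by
  rw [LieAlgebra.ExtendScalars.bracket_tmul]
  exact tmul_mem_resonantSubspace_of_mem_biSup (fun r hr ↦ hres p q r hr a ha b hb)
    (hbracket p q x hx y hy)

end Resonant

theorem resonant_subspace_closed_under_bracket_general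
    (k A L : Type*) [Field k] [CommRing A] [Algebra k A]
    [LieRing L] [LieAlgebra k L]
    (I : Type*) (ρ : I × I → Set I)
    (V : I → Submodule k L) (S : I → Submodule k A)
    (hbracket : ∀ p q : I, ∀ x ∈ V p, ∀ y ∈ V q, ⁅x, y⁆ ∈ ⨆ r ∈ ρ (p, q), V r)
    (hres : ∀ p q : I, ∀ r ∈ ρ (p, q), ∀ a ∈ S p, ∀ b ∈ S q, a * b ∈ S r) :
    ∀ u v : A ⊗[k] L,
      u ∈ Submodule.span k {t : A ⊗[k] L | ∃ p a x, a ∈ S p ∧ x ∈ V p ∧ t = a ⊗ₜ[k] x} →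
      v ∈ Submodule.span k {t : A ⊗[k] L | ∃ p a x, a ∈ S p ∧ x ∈ V p ∧ t = a ⊗ₜ[k] x} →
      ⁅u, v⁆ ∈ Submodule.span k {t : A ⊗[k] L | ∃ p a x, a ∈ S p ∧ x ∈ V p ∧ t = a ⊗ₜ[k] x} := by
  intro u v hu hv
  refine Submodule.lie_mem_span_of_forall_lie_mem ?_ hu hv
  rintro _ ⟨p, a, x, ha, hx, rfl⟩ _ ⟨q, b, y, hb, hy, rfl⟩
  exact lie_tmul_mem_resonantSubspace hbracket hres ha hx hb hy

/-- The resonant subspace `⨁ₚ Aₚ ⊗ Vₚ` of the expanded Lie algebra `A ⊗[k] L` is closed under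
the Lie bracket, i.e. it is a Lie subalgebra (the resonant subalgebra). -/
theorem resonant_subspace_closed_under_bracket
    (k A L : Type*) [Field k] [CommRing A] [Algebra k A]
    [LieRing L] [LieAlgebra k L]
    (I : Type*) (ρ : I × I → Set I)
    (V : I → Submodule k L) (S : I → Submodule k A)
    (hV : ⨆ p, V p = ⊤)
    (hbracket : ∀ p q : I, ∀ x ∈ V p, ∀ y ∈ V q, ⁅x, y⁆ ∈ ⨆ r ∈ ρ (p, q), V r)
    (hres : ∀ p q : I, ∀ r ∈ ρ (p, q), ∀ a ∈ S p, ∀ b ∈ S q, a * b ∈ S r) :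
    ∀ u v : A ⊗[k] L,
      u ∈ Submodule.span k {t : A ⊗[k] L | ∃ p a x, a ∈ S p ∧ x ∈ V p ∧ t = a ⊗ₜ[k] x} →
      v ∈ Submodule.span k {t : A ⊗[k] L | ∃ p a x, a ∈ S p ∧ x ∈ V p ∧ t = a ⊗ₜ[k] x} →
      ⁅u, v⁆ ∈ Submodule.span k {t : A ⊗[k] L | ∃ p a x, a ∈ S p ∧ x ∈ V p ∧ t = a ⊗ₜ[k] x} :=
  resonant_subspace_closed_under_bracket_general k A L I ρ V S hbracket hres
end

section
/- Let k be a field, A a commutative unital k-algebra, L a solvable Lie algebra over k, and J an ideal of the ring A. Then the reduced algebra — the quotient of A ⊗[k] L by the Lie ideal spanned by the pure tensors j ⊗ x with j ∈ J and x ∈ L — is a solvable Lie algebra. -/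
/-! The derived series of `A ⊗[k] L` is the base change of that of `L`, so `A ⊗[k] L` is solvable
(a Mathlib instance); solvability then passes to quotients through the surjective quotient map. -/

open scoped TensorProduct

/-- The expanded Lie algebra `A ⊗[k] L` is a Lie algebra over `k` (not just over `A`). -/
noncomputable instance expandedLieAlgebra (k A L : Type*) [Field k] [CommRing A] [Algebra k A]
    [LieRing L] [LieAlgebra k L] : LieAlgebra k (A ⊗[k] L) where
  lie_smul c x y := by
    rw [← algebraMap_smul A c y, lie_smul, algebraMap_smul]

instance LieIdeal.isSolvable_quotient {R L : Type*} [CommRing R] [LieRing L] [LieAlgebra R L]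
    [LieAlgebra.IsSolvable L] (I : LieIdeal R L) : LieAlgebra.IsSolvable (L ⧸ I) :=
  Function.Surjective.lieAlgebra_isSolvable (R := R)
    (f := { (LieSubmodule.Quotient.mk' I : L →ₗ[R] L ⧸ I) with map_lie' := rfl })
    (LieSubmodule.Quotient.surjective_mk' I)

theorem reduced_algebra_of_solvable_isSolvable_general
    (k A L : Type*) [Field k] [CommRing A] [Algebra k A]
    [LieRing L] [LieAlgebra k L] [LieAlgebra.IsSolvable L]
    (I : LieIdeal k (A ⊗[k] L)) :
    LieAlgebra.IsSolvable ((A ⊗[k] L) ⧸ I) :=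
  inferInstance

/-- The reduced algebra `(A ⊗[k] L) / (J ⊗ L)` of the expansion of a solvable Lie algebra is
solvable. -/
theorem reduced_algebra_of_solvable_isSolvable
    (k A L : Type*) [Field k] [CommRing A] [Algebra k A]
    [LieRing L] [LieAlgebra k L] [LieAlgebra.IsSolvable L]
    (J : Ideal A) (I : LieIdeal k (A ⊗[k] L))
    (hI : I.toSubmodule = Submodule.span k {t : A ⊗[k] L | ∃ j x, j ∈ J ∧ t = j ⊗ₜ[k] x}) :
    LieAlgebra.IsSolvable ((A ⊗[k] L) ⧸ I) :=
  reduced_algebra_of_solvable_isSolvable_general k A L I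
end

section
/- Let k be a field, A a finite-dimensional commutative unital k-algebra, and L a finite-dimensional Lie algebra over k. Then for all a, b ∈ A and x, y ∈ L, the Killing form of the expanded Lie algebra A ⊗[k] L satisfies κ_{A⊗L}(a ⊗ x, b ⊗ y) = τ_A(a, b) · κ_L(x, y), where τ_A is the trace form of A and κ_L the Killing form of L; i.e., the Killing form of the expansion is the tensor (Kronecker) product of the trace form of A with the Killing form of L. -/
open scoped TensorProduct

/-- The Killing form of the expanded Lie algebra `A ⊗[k] L` is the tensor (Kronecker) product of
the trace form of `A` with the Killing form of `L`. -/
theorem killingForm_expansion_tmul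
    (k A L : Type*) [Field k] [CommRing A] [Algebra k A] [FiniteDimensional k A]
    [LieRing L] [LieAlgebra k L] [FiniteDimensional k L]
    (a b : A) (x y : L) :
    killingForm k (A ⊗[k] L) (a ⊗ₜ[k] x) (b ⊗ₜ[k] y)
      = Algebra.traceForm k A a b * killingForm k L x y := by
  have h : (LieModule.toEnd k (A ⊗[k] L) (A ⊗[k] L) (a ⊗ₜ[k] x)) ∘ₗ
      (LieModule.toEnd k (A ⊗[k] L) (A ⊗[k] L) (b ⊗ₜ[k] y)) =
      TensorProduct.map (LinearMap.mulLeft k (a * b))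
        ((LieModule.toEnd k L L x) ∘ₗ (LieModule.toEnd k L L y)) := by
    ext c z
    simp only [LinearMap.coe_comp, Function.comp_apply, TensorProduct.AlgebraTensorModule.curry_apply,
      TensorProduct.curry_apply, LinearMap.coe_restrictScalars, LieModule.toEnd_apply_apply,
      TensorProduct.map_tmul, LinearMap.mulLeft_apply, LieAlgebra.ExtendScalars.bracket_tmul]
    ring_nf
  rw [LieModule.traceForm_apply_apply, h, LinearMap.trace_tensorProduct',
    LieModule.traceForm_apply_apply, Algebra.traceForm_apply, Algebra.trace_apply]
  congr 1
end

section
/- Let k be a field, A a nonzero finite-dimensional commutative unital k-algebra, and L a nonzero finite-dimensional Lie algebra over k whose Killing form κ_L is nondegenerate. Then the Killing form of the expanded Lie algebra A ⊗[k] L is nondegenerate if and only if the trace form τ_A of A is nondegenerate. -/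
open scoped TensorProduct

/-!
Since `ad (a ⊗ x) = m_a ⊗ ad x` and the trace is multiplicative on tensor products of
endomorphisms, the Killing form of `A ⊗[k] L` is the tensor product `τ_A ⊗ κ_L`. In product bases
its Gram matrix is the Kronecker product of the Gram matrices, with determinant
`det(τ_A) ^ dim L * det(κ_L) ^ dim A`; as `det(κ_L) ≠ 0` and `dim L > 0`, this vanishes exactly
when `det(τ_A)` does.
-/

open scoped Kronecker

namespace LinearMap.BilinForm

open LinearMap (BilinForm)

theorem toMatrix_tmul {R M₁ M₂ ι₁ ι₂ : Type*} [CommRing R] [AddCommGroup M₁] [Module R M₁]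
    [AddCommGroup M₂] [Module R M₂] [Fintype ι₁] [Fintype ι₂] [DecidableEq ι₁] [DecidableEq ι₂]
    (b₁ : Module.Basis ι₁ R M₁) (b₂ : Module.Basis ι₂ R M₂)
    (B₁ : BilinForm R M₁) (B₂ : BilinForm R M₂) :
    toMatrix (b₁.tensorProduct b₂) (B₁.tmul B₂) = toMatrix b₁ B₁ ⊗ₖ toMatrix b₂ B₂ := by
  ext ⟨i₁, i₂⟩ ⟨j₁, j₂⟩
  simp [mul_comm]

theorem nondegenerate_tmul_iff_left {K M₁ M₂ : Type*} [Field K] [AddCommGroup M₁] [Module K M₁]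
    [AddCommGroup M₂] [Module K M₂] [FiniteDimensional K M₁] [FiniteDimensional K M₂]
    [Nontrivial M₂] {B₁ : BilinForm K M₁} {B₂ : BilinForm K M₂} (hB₂ : B₂.Nondegenerate) :
    Nondegenerate (B₁.tmul B₂) ↔ B₁.Nondegenerate := by
  let b₁ := Module.finBasis K M₁
  let b₂ := Module.finBasis K M₂
  rw [nondegenerate_iff_det_ne_zero b₂] at hB₂
  have hdim : Module.finrank K M₂ ≠ 0 := Module.finrank_pos.ne'
  rw [nondegenerate_iff_det_ne_zero (b₁.tensorProduct b₂), nondegenerate_iff_det_ne_zero b₁,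
    toMatrix_tmul, Matrix.det_kronecker]
  simp [hB₂, hdim]

end LinearMap.BilinForm

section Expansion

variable (k A L : Type*) [Field k] [CommRing A] [Algebra k A] [LieRing L] [LieAlgebra k L]

theorem toEnd_tmul_eq_map (a : A) (x : L) :
    LieModule.toEnd k (A ⊗[k] L) (A ⊗[k] L) (a ⊗ₜ x) =
      TensorProduct.map (Algebra.lmul k A a) (LieModule.toEnd k L L x) :=
  TensorProduct.ext' fun _ _ => rfl

theorem killingForm_tensorProduct_eq_tmul [FiniteDimensional k A] [FiniteDimensional k L] :
    killingForm k (A ⊗[k] L) = (Algebra.traceForm k A).tmul (killingForm k L) := by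
  refine TensorProduct.ext' fun a x => TensorProduct.ext' fun b y => ?_
  rw [LieModule.traceForm_apply_apply, toEnd_tmul_eq_map, toEnd_tmul_eq_map,
    ← TensorProduct.map_comp, LinearMap.trace_tensorProduct', LinearMap.BilinForm.tmul,
    LinearMap.BilinForm.tensorDistrib_tmul, smul_eq_mul, mul_comm, Algebra.traceForm_apply,
    Algebra.trace_apply, map_mul, Module.End.mul_eq_comp, LieModule.traceForm_apply_apply]

end Expansion

theorem killingForm_expansion_nondegenerate_iff_general
    (k A L : Type*) [Field k] [CommRing A] [Algebra k A] [FiniteDimensional k A]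
    [LieRing L] [LieAlgebra k L] [Nontrivial L] [FiniteDimensional k L]
    (hL : LinearMap.BilinForm.Nondegenerate (killingForm k L)) :
    LinearMap.BilinForm.Nondegenerate (killingForm k (A ⊗[k] L)) ↔
      LinearMap.BilinForm.Nondegenerate (Algebra.traceForm k A) := by
  rw [killingForm_tensorProduct_eq_tmul]
  exact LinearMap.BilinForm.nondegenerate_tmul_iff_left hL

/-- If the Killing form of `L` is nondegenerate, then the Killing form of the expanded Lie
algebra `A ⊗[k] L` is nondegenerate if and only if the trace form of `A` is nondegenerate. -/
theorem killingForm_expansion_nondegenerate_iff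
    (k A L : Type*) [Field k] [CommRing A] [Algebra k A] [Nontrivial A] [FiniteDimensional k A]
    [LieRing L] [LieAlgebra k L] [Nontrivial L] [FiniteDimensional k L]
    (hL : LinearMap.BilinForm.Nondegenerate (killingForm k L)) :
    LinearMap.BilinForm.Nondegenerate (killingForm k (A ⊗[k] L)) ↔
      LinearMap.BilinForm.Nondegenerate (Algebra.traceForm k A) :=
  killingForm_expansion_nondegenerate_iff_general k A L hL
end

section
/- Let k be a field, A a commutative unital k-algebra, and L a Lie algebra over k. Then the image in A ⊗[k] L of A tensored with the radical of L (the k-submodule spanned by the pure tensors a ⊗ n with a ∈ A and n ∈ radical(L)) is contained in the radical of the expanded Lie algebra A ⊗[k] L. -/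
open scoped TensorProduct

/-!
For a solvable ideal `I` of `L`, the `A`-ideal `A ⊗ I` of `A ⊗[k] L` has derived series
`A ⊗ D^n(I)`, so it is solvable over `A`; since `k`-brackets of an `A`-ideal are among its
`A`-brackets, it stays solvable as a `k`-ideal and so lies in the radical. The radical of `L` is
the supremum of such `I`, and `a ⊗ -` carries the supremum into the same bound.
-/

namespace LieIdeal

open LieAlgebra

lemma isSolvable_iff_exists_derivedSeriesOfIdeal_eq_bot {R L : Type*} [CommRing R] [LieRing L]
    [LieAlgebra R L] (I : LieIdeal R L) :
    IsSolvable I ↔ ∃ n, derivedSeriesOfIdeal R L n I = ⊥ := by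
  simp only [isSolvable_iff R, derivedSeries_eq_bot_iff]

section RestrictScalars

variable (R : Type*) {A L : Type*} [CommRing R] [CommRing A] [Algebra R A] [LieRing L]
  [LieAlgebra A L] [LieAlgebra R L] [IsScalarTower R A L]

def restrictScalars (J : LieIdeal A L) : LieIdeal R L where
  __ := J.toSubmodule.restrictScalars R
  lie_mem hx := J.lie_mem hx

@[simp]
lemma mem_restrictScalars {J : LieIdeal A L} {x : L} : x ∈ J.restrictScalars R ↔ x ∈ J :=
  Iff.rfl

lemma derivedSeriesOfIdeal_restrictScalars_le (J : LieIdeal A L) (n : ℕ) :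
    derivedSeriesOfIdeal R L n (J.restrictScalars R) ≤
      (derivedSeriesOfIdeal A L n J).restrictScalars R := by
  induction n with
  | zero => exact le_rfl
  | succ n ih =>
    rw [derivedSeriesOfIdeal_succ, derivedSeriesOfIdeal_succ, LieSubmodule.lieIdeal_oper_eq_span,
      LieSubmodule.lieSpan_le]
    rintro - ⟨x, y, rfl⟩
    exact (mem_restrictScalars R).mpr (LieSubmodule.lie_mem_lie (ih x.2) (ih y.2))

lemma isSolvable_restrictScalars (J : LieIdeal A L) [IsSolvable J] :
    IsSolvable (J.restrictScalars R) := by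
  obtain ⟨n, hn⟩ := (isSolvable_iff_exists_derivedSeriesOfIdeal_eq_bot J).mp ‹_›
  refine (isSolvable_iff_exists_derivedSeriesOfIdeal_eq_bot _).mpr ⟨n, eq_bot_iff.mpr ?_⟩
  intro x hx
  simpa [hn] using derivedSeriesOfIdeal_restrictScalars_le R J n hx

end RestrictScalars

lemma isSolvable_baseChange {R L : Type*} (A : Type*) [CommRing R] [CommRing A] [Algebra R A]
    [LieRing L] [LieAlgebra R L] (I : LieIdeal R L) [IsSolvable I] :
    IsSolvable (I.baseChange A) := by
  obtain ⟨n, hn⟩ := (isSolvable_iff_exists_derivedSeriesOfIdeal_eq_bot I).mp ‹_›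
  refine (isSolvable_iff_exists_derivedSeriesOfIdeal_eq_bot _).mpr ⟨n, ?_⟩
  rw [derivedSeriesOfIdeal_baseChange, hn, LieSubmodule.baseChange_bot]

lemma restrictScalars_baseChange_le_radical {k L : Type*} (A : Type*) [Field k] [CommRing A]
    [Algebra k A] [LieRing L] [LieAlgebra k L] (I : LieIdeal k L) [IsSolvable I] :
    restrictScalars k (I.baseChange A) ≤ radical k (A ⊗[k] L) :=
  have := isSolvable_baseChange A I
  le_sSup (isSolvable_restrictScalars k (I.baseChange A))

end LieIdeal

/-- The image of `A ⊗ radical(L)` in the expanded Lie algebra `A ⊗[k] L` is contained in the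
radical of `A ⊗[k] L`. -/
theorem expansion_of_radical_le_radical
    (k A L : Type*) [Field k] [CommRing A] [Algebra k A]
    [LieRing L] [LieAlgebra k L] :
    Submodule.span k {t : A ⊗[k] L | ∃ a n, n ∈ LieAlgebra.radical k L ∧ t = a ⊗ₜ[k] n}
      ≤ (LieAlgebra.radical k (A ⊗[k] L)).toSubmodule := by
  rw [Submodule.span_le]
  rintro - ⟨a, n, hn, rfl⟩
  suffices (LieAlgebra.radical k L).toSubmodule ≤
      (LieAlgebra.radical k (A ⊗[k] L)).toSubmodule.comap (TensorProduct.mk k A L a) from this hn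
  rw [LieAlgebra.radical, LieSubmodule.sSup_toSubmodule_eq_iSup]
  exact iSup₂_le fun I (_ : LieAlgebra.IsSolvable I) m hm =>
    LieIdeal.restrictScalars_baseChange_le_radical A I (LieSubmodule.tmul_mem_baseChange_of_mem a hm)
end

section
/- Let k be a field and M a finite commutative monoid, and let A = MonoidAlgebra k M be its monoid algebra. Then for all σ, τ ∈ M, the trace form of A evaluated on the basis elements satisfies τ_A(single σ 1, single τ 1) = n · 1_k, where n is the number of elements γ ∈ M such that σ * τ * γ = γ. -/
namespace MonoidAlgebra

variable {R M : Type*} [CommRing R] [Fintype M] [DecidableEq M]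

theorem leftMulMatrix_basis_single_apply [Monoid M] (m : M) (r : R) (γ' γ : M) :
    Algebra.leftMulMatrix (basis M R) (single m r) γ' γ = if m * γ = γ' then r else 0 := by
  rw [Algebra.leftMulMatrix_eq_repr_mul, basis_apply, single_mul_single, mul_one]
  exact Finsupp.single_apply

theorem trace_single [CommMonoid M] (m : M) (r : R) :
    Algebra.trace R (MonoidAlgebra R M) (single m r)
      = (Finset.univ.filter fun γ => m * γ = γ).card • r := by
  rw [Algebra.trace_eq_matrix_trace (basis M R), Matrix.trace]
  simp only [Matrix.diag_apply, leftMulMatrix_basis_single_apply]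
  rw [Finset.sum_ite, Finset.sum_const_zero, add_zero, Finset.sum_const]

end MonoidAlgebra

/-- For a finite commutative monoid `M`, the trace form of the monoid algebra `k[M]`, evaluated
on basis elements `λ_σ`, `λ_τ`, equals `n · 1_k` where `n` is the number of elements `γ ∈ M`
with `σ * τ * γ = γ`. This is the matrix `g^S` of the paper. -/
theorem traceForm_monoidAlgebra_single
    (k M : Type*) [Field k] [CommMonoid M] [Fintype M] [DecidableEq M] (σ τ : M) :
    Algebra.traceForm k (MonoidAlgebra k M)
        (MonoidAlgebra.single σ (1 : k)) (MonoidAlgebra.single τ (1 : k))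
      = ((Finset.univ.filter fun γ : M => σ * τ * γ = γ).card : k) := by
  rw [Algebra.traceForm_apply, MonoidAlgebra.single_mul_single, mul_one,
    MonoidAlgebra.trace_single, nsmul_one]
end
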